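/- If U : ℝ → ℝ^{n×N} is differentiable and satisfies the ODE dU/dt = -2·skew(G(t)·U(t)ᵀ)·U(t) for some matrix-valued function G(t) ∈ ℝ^{n×N}, and U(0)ᵀU(0) = I_N, then U(t)ᵀU(t) = I_N for all t ≥ 0. -/

import Mathlib

open Matrix

/-- The flow dU/dt = -2 skew(G Uᵀ) U preserves UᵀU = I. -/
theorem stmt_1 {n N : ℕ} (U G : ℝ → Matrix (Fin n) (Fin N) ℝ)
    (hU : ∀ t (i : Fin n) (j : Fin N),
      HasDerivAt (fun s => U s i j)
        (((-2 : ℝ) • ((((1 : ℝ)/2) • (G t * (U t)ᵀ - (G t * (U t)ᵀ)ᵀ)) * U t)) i j) t)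
    (h0 : (U 0)ᵀ * U 0 = 1) :
    ∀ t : ℝ, 0 ≤ t → (U t)ᵀ * U t = 1 := by
  set D : ℝ → Matrix (Fin n) (Fin N) ℝ := fun t =>
    ((-2 : ℝ) • ((((1 : ℝ)/2) • (G t * (U t)ᵀ - (G t * (U t)ᵀ)ᵀ)) * U t)) with hD
  have key : ∀ t, (D t)ᵀ * U t + (U t)ᵀ * D t = 0 := by
    intro t
    simp only [hD, transpose_smul, transpose_mul, transpose_sub, transpose_transpose]
    rw [Matrix.smul_mul, Matrix.smul_mul, Matrix.mul_smul, Matrix.mul_smul,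
      Matrix.mul_smul, Matrix.smul_mul, Matrix.mul_assoc]
    rw [← smul_add, ← smul_add, ← Matrix.mul_add, ← Matrix.add_mul,
      sub_add_sub_cancel', sub_self]
    simp
  have hconst : ∀ j k, ∀ s : ℝ, ((U s)ᵀ * U s) j k = ((U 0)ᵀ * U 0) j k := by
    intro j k
    have hder : ∀ s : ℝ, HasDerivAt (fun s => ((U s)ᵀ * U s) j k) 0 s := by
      intro s
      have : HasDerivAt (fun s => ∑ i, U s i j * U s i k)
          (∑ i, (D s i j * U s i k + U s i j * D s i k)) s := by
        apply HasDerivAt.fun_sum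
        intro i _
        exact (hU s i j).mul (hU s i k)
      have h2 : (∑ i, (D s i j * U s i k + U s i j * D s i k))
          = ((D s)ᵀ * U s + (U s)ᵀ * D s) j k := by
        simp [Matrix.add_apply, Matrix.mul_apply, Finset.sum_add_distrib]
      rw [h2, key s] at this
      simpa [Matrix.mul_apply] using this
    intro s
    have := fun x => (hder x).deriv
    exact (is_const_of_deriv_eq_zero (fun x => (hder x).differentiableAt) this s 0)
  intro t _
  ext j k
  rw [hconst j k t, h0]
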